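/- The weighting functions form a Kleisli triple: for all sets X, Y, Z, all f : X → W(Y), g : Y → W(Z), m ∈ W(X) and x ∈ X: (i) f†(m) has countable support, so f†(m) ∈ W(Y); (ii) η†(m) = m; (iii) f†(η(x)) = f(x); and (iv) g†(f†(m)) = (g† ∘ f)†(m). -/

import Mathlib

open scoped Classical

universe u v

/-- A semiring that is simultaneously a complete lattice with bottom `0`, whose order
coincides with the natural (additive) order, and in which addition and multiplication
are Scott-continuous. -/
class OLSemiring (U : Type u) extends Semiring U, CompleteLattice U where
  bot_eq_zero : (⊥ : U) = 0
  le_iff_exists_add : ∀ a b : U, a ≤ b ↔ ∃ c, a + c = b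
  add_scott : ∀ (D : Set U), D.Nonempty → DirectedOn (· ≤ ·) D → ∀ y : U,
    sSup ((fun x => x + y) '' D) = sSup D + y
  mul_scott_right : ∀ (D : Set U), D.Nonempty → DirectedOn (· ≤ ·) D → ∀ y : U,
    sSup ((fun x => x * y) '' D) = sSup D * y
  mul_scott_left : ∀ (D : Set U), D.Nonempty → DirectedOn (· ≤ ·) D → ∀ y : U,
    sSup ((fun x => y * x) '' D) = y * sSup D

variable {U : Type u} [OLSemiring U]

/-- Infinite sum: supremum over finite subfamilies of finite sums. -/
noncomputable def wsum {I : Type v} (f : I → U) : U :=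
  ⨆ J : Finset I, ∑ i ∈ J, f i

/-- The unit of the weighting monad. -/
noncomputable def eta {X : Type u} (x : X) : X → U :=
  fun y => if y = x then 1 else 0

/-- Kleisli extension: `kext f m y = ∑_{x ∈ supp m} m x * f x y`. -/
noncomputable def kext {X Y : Type u} (f : X → Y → U) (m : X → U) : Y → U :=
  fun y => wsum (fun x : Function.support m => m x.1 * f x.1 y)

/-!
Writing `f†(m)(y)` as the sum `∑ₓ m x * f x y` over all of `X` (the terms outside `supp m`
vanish), the unit laws are sums with a single nonzero term, and associativity is the
interchange `∑_y ∑_x = ∑_x ∑_y` together with distributivity of `·` over `∑`. Both rest on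
Scott continuity: `∑` is a directed supremum of finite sums, so it commutes with `+` (making
`∑` additive, hence commuting with finite sums) and with left and right multiplication.
Countability of the support follows from `supp f†(m) ⊆ ⋃_{x ∈ supp m} supp f(x)`.
-/

instance OLSemiring.toCanonicallyOrderedAdd : CanonicallyOrderedAdd U where
  exists_add_of_le h := ((OLSemiring.le_iff_exists_add _ _).1 h).imp fun _ hc => hc.symm
  le_add_self _ b := (OLSemiring.le_iff_exists_add _ _).2 ⟨b, add_comm _ _⟩
  le_self_add _ b := (OLSemiring.le_iff_exists_add _ _).2 ⟨b, rfl⟩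

instance OLSemiring.toIsOrderedAddMonoid : IsOrderedAddMonoid U :=
  CanonicallyOrderedAdd.toIsOrderedAddMonoid

namespace OLSemiring

variable {I J : Type*}

lemma sum_le_wsum (f : I → U) (s : Finset I) : ∑ i ∈ s, f i ≤ wsum f :=
  le_iSup (fun s : Finset I => ∑ i ∈ s, f i) s

lemma wsum_le {f : I → U} {c : U} (h : ∀ s : Finset I, ∑ i ∈ s, f i ≤ c) : wsum f ≤ c :=
  iSup_le h

lemma wsum_mono {f g : I → U} (h : ∀ i, f i ≤ g i) : wsum f ≤ wsum g :=
  wsum_le fun s => (Finset.sum_le_sum fun i _ => h i).trans (sum_le_wsum g s)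

lemma wsum_eq_zero {f : I → U} (h : ∀ i, f i = 0) : wsum f = 0 :=
  le_antisymm (wsum_le fun _ => (Finset.sum_eq_zero fun i _ => h i).le) zero_le

lemma wsum_eq_single {f : I → U} (i₀ : I) (h : ∀ i, i ≠ i₀ → f i = 0) : wsum f = f i₀ :=
  le_antisymm (wsum_le fun s => (Finset.sum_le_sum_of_subset (s.subset_insert i₀)).trans_eq
    (Finset.sum_eq_single_of_mem i₀ (s.mem_insert_self i₀) fun i _ hi => h i hi))
    (by simpa using sum_le_wsum f {i₀})

lemma wsum_subtype_eq {s : Set I} (f : I → U) (hs : Function.support f ⊆ s) :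
    wsum (fun i : s => f i) = wsum f := by
  refine le_antisymm (wsum_le fun t => ?_) (wsum_le fun t => ?_)
  · exact (Finset.sum_map t (Function.Embedding.subtype _) f).symm.trans_le (sum_le_wsum f _)
  · calc ∑ i ∈ t, f i = ∑ i ∈ t.filter (· ∈ s), f i :=
          (Finset.sum_filter_of_ne fun i _ hi => hs hi).symm
      _ = ∑ i ∈ t.subtype (· ∈ s), f i := by
          rw [← Finset.subtype_map, Finset.sum_map]; rfl
      _ ≤ wsum (fun i : s => f i) := sum_le_wsum _ _

lemma map_wsum {φ : U → U}
    (hφ : ∀ D : Set U, D.Nonempty → DirectedOn (· ≤ ·) D → sSup (φ '' D) = φ (sSup D))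
    (f : I → U) : φ (wsum f) = ⨆ s : Finset I, φ (∑ i ∈ s, f i) := by
  rw [wsum, ← sSup_range, ← hφ _ (Set.range_nonempty _)
    (Finset.sum_mono_set f).directed_le.directedOn_range, ← Set.range_comp, sSup_range]
  rfl

lemma wsum_mul (f : I → U) (c : U) : wsum f * c = wsum (fun i => f i * c) := by
  rw [map_wsum (φ := (· * c)) fun D hD hd => mul_scott_right D hD hd c, wsum]
  simp only [Finset.sum_mul]

lemma mul_wsum (f : I → U) (c : U) : c * wsum f = wsum (fun i => c * f i) := by
  rw [map_wsum (φ := (c * ·)) fun D hD hd => mul_scott_left D hD hd c, wsum]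
  simp only [Finset.mul_sum]

lemma wsum_add (f g : I → U) : wsum (f + g) = wsum f + wsum g := by
  refine le_antisymm (wsum_le fun s => ?_) ?_
  · rw [Pi.add_def, Finset.sum_add_distrib]
    exact add_le_add (sum_le_wsum f s) (sum_le_wsum g s)
  rw [map_wsum (φ := (· + wsum g)) fun D hD hd => add_scott D hD hd _]
  refine iSup_le fun s => ?_
  rw [add_comm, map_wsum (φ := (· + ∑ i ∈ s, f i)) fun D hD hd => add_scott D hD hd _]
  refine iSup_le fun t => ?_
  calc ∑ i ∈ t, g i + ∑ i ∈ s, f i ≤ ∑ i ∈ s ∪ t, g i + ∑ i ∈ s ∪ t, f i :=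
        add_le_add (Finset.sum_le_sum_of_subset Finset.subset_union_right)
          (Finset.sum_le_sum_of_subset Finset.subset_union_left)
    _ = ∑ i ∈ s ∪ t, (f + g) i := by rw [add_comm, ← Finset.sum_add_distrib]; rfl
    _ ≤ wsum (f + g) := sum_le_wsum _ _

noncomputable def wsumAddMonoidHom (I : Type*) : (I → U) →+ U where
  toFun := wsum
  map_zero' := wsum_eq_zero fun _ => rfl
  map_add' := wsum_add

lemma wsum_comm_le (t : I → J → U) :
    wsum (fun i => wsum (t i)) ≤ wsum (fun j => wsum (fun i => t i j)) :=
  wsum_le fun s => calc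
    ∑ i ∈ s, wsum (t i) = wsum (fun j => ∑ i ∈ s, t i j) := by
      rw [← Finset.sum_fn]
      exact (map_sum (wsumAddMonoidHom J) t s).symm
    _ ≤ wsum (fun j => wsum (fun i => t i j)) :=
      wsum_mono fun j => sum_le_wsum (fun i => t i j) s

lemma wsum_comm (t : I → J → U) :
    wsum (fun i => wsum (t i)) = wsum (fun j => wsum (fun i => t i j)) :=
  le_antisymm (wsum_comm_le t) (wsum_comm_le fun j i => t i j)

end OLSemiring

open OLSemiring

lemma kext_apply {X Y : Type u} (f : X → Y → U) (m : X → U) (y : Y) :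
    kext f m y = wsum (fun x => m x * f x y) :=
  wsum_subtype_eq (fun x => m x * f x y) (Function.support_mul_subset_left _ _)

lemma support_kext_subset {X Y : Type u} (f : X → Y → U) (m : X → U) :
    Function.support (kext f m) ⊆ ⋃ x ∈ Function.support m, Function.support (f x) := by
  refine Function.support_subset_iff'.2 fun y hy =>
    (kext_apply f m y).trans (wsum_eq_zero fun x => ?_)
  by_cases hx : m x = 0
  · rw [hx, zero_mul]
  · rw [Function.notMem_support.1 fun hfx => hy (Set.mem_biUnion hx hfx), mul_zero]

lemma kext_eta_left {X : Type u} (m : X → U) : kext eta m = m := by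
  funext y
  rw [kext_apply, wsum_eq_single y fun x hx => by simp [eta, Ne.symm hx]]
  simp [eta]

lemma kext_eta_right {X Y : Type u} (f : X → Y → U) (x : X) : kext f (eta x) = f x := by
  funext y
  rw [kext_apply, wsum_eq_single x fun x' hx' => by simp [eta, hx']]
  simp [eta]

lemma kext_kext {X Y Z : Type u} (f : X → Y → U) (g : Y → Z → U) (m : X → U) :
    kext g (kext f m) = kext (fun x => kext g (f x)) m := by
  funext z
  calc kext g (kext f m) z = wsum (fun y => wsum (fun x => m x * f x y * g y z)) := by
        simp only [kext_apply, wsum_mul]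
    _ = wsum (fun x => wsum (fun y => m x * f x y * g y z)) := wsum_comm _
    _ = kext (fun x => kext g (f x)) m z := by
        simp only [kext_apply, mul_wsum, mul_assoc]

theorem kext_kleisli_triple_general {U : Type u} [OLSemiring U] {X Y Z : Type u}
    (f : X → Y → U) (g : Y → Z → U) (m : X → U) (x : X)
    (hm : (Function.support m).Countable)
    (hf : ∀ x, (Function.support (f x)).Countable) :
    (Function.support (kext f m)).Countable ∧
    kext (eta (U := U)) m = m ∧
    kext f (eta x) = f x ∧
    kext g (kext f m) = kext (fun x' => kext g (f x')) m :=
  ⟨(hm.biUnion fun x _ => hf x).mono (support_kext_subset f m), kext_eta_left m,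
    kext_eta_right f x, kext_kext f g m⟩

/-- **Weighting functions form a Kleisli triple**: for `f : X → W(Y)`, `g : Y → W(Z)`,
`m ∈ W(X)` and `x ∈ X`:
(i) `f†(m)` has countable support (so `f†(m) ∈ W(Y)`);
(ii) `η†(m) = m`;
(iii) `f†(η(x)) = f(x)`;
(iv) `g†(f†(m)) = (g† ∘ f)†(m)`. -/
theorem kext_kleisli_triple {U : Type u} [OLSemiring U] {X Y Z : Type u}
    (f : X → Y → U) (g : Y → Z → U) (m : X → U) (x : X)
    (hm : (Function.support m).Countable)
    (hf : ∀ x, (Function.support (f x)).Countable)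
    (hg : ∀ y, (Function.support (g y)).Countable) :
    (Function.support (kext f m)).Countable ∧
    kext (eta (U := U)) m = m ∧
    kext f (eta x) = f x ∧
    kext g (kext f m) = kext (fun x' => kext g (f x')) m :=
  kext_kleisli_triple_general f g m x hm hf
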